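/- Let H₁ and H₂ be complex Hilbert spaces, X : H₂ → H₁ and Y : H₁ → H₂ bounded linear operators, and set S = X*X + YY* (an operator on H₂). Then w(XY) ≤ (1/4)·√(‖S‖² + 4 w(YX)² + 2 w(YXS + S(YX))). -/

import Mathlib

noncomputable def numRadius {H : Type*} [NormedAddCommGroup H] [InnerProductSpace ℂ H]
    (T : H →L[ℂ] H) : ℝ :=
  sSup {r : ℝ | ∃ x : H, ‖x‖ = 1 ∧ r = ‖(inner ℂ (T x) x : ℂ)‖}

/-! Fix a unit vector `x` and a unimodular `c` making `c ⟪X† x, Y x⟫` nonnegative. For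
`A = X† + c Y` one gets `4 |⟪X Y x, x⟫| ≤ ‖A x‖² ≤ ‖A A†‖ = ‖S + C‖`, where `C = c Y X + (c Y X)†`.
Both `S` and `C` are self-adjoint, so `‖S + C‖² = ‖(S + C)²‖ ≤ ‖S‖² + ‖S C + C S‖ + ‖C‖²`.
Since `S C + C S = c K + (c K)†` with `K = Y X S + S Y X`, and `‖T + T†‖ ≤ 2 w(T)` (a self-adjoint
operator has norm equal to its numerical radius), the last two terms are at most `2 w(K)` and
`4 w(Y X)²`. -/

open ContinuousLinearMap
open scoped InnerProductSpace InnerProduct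

section NumRadius

variable {H : Type*} [NormedAddCommGroup H] [InnerProductSpace ℂ H]

lemma numRadius_nonneg (T : H →L[ℂ] H) : 0 ≤ numRadius T :=
  Real.sSup_nonneg (by rintro r ⟨x, -, rfl⟩; positivity)

lemma numRadius_le_of_unit_norm {T : H →L[ℂ] H} {c : ℝ} (hc : 0 ≤ c)
    (h : ∀ x, ‖x‖ = 1 → ‖⟪T x, x⟫_ℂ‖ ≤ c) : numRadius T ≤ c :=
  Real.sSup_le (by rintro r ⟨x, hx, rfl⟩; exact h x hx) hc

lemma norm_inner_le_numRadius (T : H →L[ℂ] H) {x : H} (hx : ‖x‖ = 1) :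
    ‖⟪T x, x⟫_ℂ‖ ≤ numRadius T := by
  refine le_csSup ⟨‖T‖, ?_⟩ ⟨x, hx, rfl⟩
  rintro r ⟨y, hy, rfl⟩
  calc ‖⟪T y, y⟫_ℂ‖ ≤ ‖T y‖ * ‖y‖ := norm_inner_le_norm _ _
    _ ≤ ‖T‖ := by simpa [hy] using T.le_opNorm y

lemma norm_inner_le_numRadius_mul_sq (T : H →L[ℂ] H) (x : H) :
    ‖⟪T x, x⟫_ℂ‖ ≤ numRadius T * ‖x‖ ^ 2 := by
  rcases eq_or_ne x 0 with rfl | hx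
  · simp
  have hx' : ‖x‖ ≠ 0 := norm_ne_zero_iff.mpr hx
  have hunit : ‖((‖x‖⁻¹ : ℝ) : ℂ) • x‖ = 1 := by
    rw [norm_smul, Complex.norm_real, norm_inv, norm_norm, inv_mul_cancel₀ hx']
  have h := norm_inner_le_numRadius T hunit
  rw [map_smul, inner_smul_left, inner_smul_right, Complex.conj_ofReal, ← mul_assoc,
    ← Complex.ofReal_mul, norm_mul, Complex.norm_real, norm_mul, norm_inv, norm_norm] at h
  rwa [← div_le_iff₀ (by positivity), div_eq_inv_mul, sq, mul_inv]

lemma numRadius_add_le (S T : H →L[ℂ] H) : numRadius (S + T) ≤ numRadius S + numRadius T :=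
  numRadius_le_of_unit_norm (add_nonneg (numRadius_nonneg S) (numRadius_nonneg T)) fun x hx => by
    rw [add_apply, inner_add_left]
    exact (norm_add_le _ _).trans
      (add_le_add (norm_inner_le_numRadius S hx) (norm_inner_le_numRadius T hx))

lemma numRadius_smul_le (c : ℂ) (T : H →L[ℂ] H) : numRadius (c • T) ≤ ‖c‖ * numRadius T :=
  numRadius_le_of_unit_norm (by have := numRadius_nonneg T; positivity) fun x hx => by
    rw [smul_apply, inner_smul_left, norm_mul, RCLike.norm_conj]
    exact mul_le_mul_of_nonneg_left (norm_inner_le_numRadius T hx) (norm_nonneg c)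

variable [CompleteSpace H]

lemma numRadius_star (T : H →L[ℂ] H) : numRadius (star T) = numRadius T := by
  unfold numRadius
  congr! 5 with r x
  rw [star_eq_adjoint, adjoint_inner_left, norm_inner_symm]

lemma IsSelfAdjoint.norm_le_numRadius {T : H →L[ℂ] H} (hT : IsSelfAdjoint T) :
    ‖T‖ ≤ numRadius T := by
  rw [norm_eq_iSup_rayleighQuotient T hT.isSymmetric]
  refine ciSup_le fun x => ?_
  rw [rayleighQuotient, reApplyInnerSelf_apply, abs_div, abs_sq]
  exact div_le_of_le_mul₀ (sq_nonneg _) (numRadius_nonneg T)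
    ((Complex.abs_re_le_norm _).trans (norm_inner_le_numRadius_mul_sq T x))

lemma norm_smul_add_star_le (c : ℂ) (T : H →L[ℂ] H) :
    ‖c • T + star (c • T)‖ ≤ 2 * ‖c‖ * numRadius T :=
  calc ‖c • T + star (c • T)‖ ≤ numRadius (c • T + star (c • T)) :=
        (IsSelfAdjoint.add_star_self _).norm_le_numRadius
    _ ≤ numRadius (c • T) + numRadius (star (c • T)) := numRadius_add_le _ _
    _ = 2 * numRadius (c • T) := by rw [numRadius_star]; ring
    _ ≤ 2 * (‖c‖ * numRadius T) := by grw [numRadius_smul_le]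
    _ = 2 * ‖c‖ * numRadius T := (mul_assoc _ _ _).symm

end NumRadius

lemma IsSelfAdjoint.mul_add_star_add {R : Type*} [Ring R] [StarRing R] {a : R}
    (ha : IsSelfAdjoint a) (m : R) :
    a * (m + star m) + (m + star m) * a = (m * a + a * m) + star (m * a + a * m) := by
  rw [star_add, star_mul, star_mul, ha.star_eq]
  noncomm_ring

lemma IsSelfAdjoint.norm_add_sq_le {A : Type*} [NonUnitalNormedRing A] [StarRing A] [CStarRing A]
    {a b : A} (ha : IsSelfAdjoint a) (hb : IsSelfAdjoint b) :
    ‖a + b‖ ^ 2 ≤ ‖a‖ ^ 2 + ‖a * b + b * a‖ + ‖b‖ ^ 2 := by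
  rw [← (ha.add hb).norm_mul_self, ← ha.norm_mul_self, ← hb.norm_mul_self]
  calc ‖(a + b) * (a + b)‖ = ‖a * a + (a * b + b * a) + b * b‖ := by noncomm_ring
    _ ≤ _ := norm_add₃_le

lemma exists_norm_eq_one_four_mul_norm_inner_le {E : Type*} [NormedAddCommGroup E]
    [InnerProductSpace ℂ E] (u v : E) :
    ∃ c : ℂ, ‖c‖ = 1 ∧ 4 * ‖⟪u, v⟫_ℂ‖ ≤ ‖u + c • v‖ ^ 2 := by
  obtain ⟨c, hc, hcuv⟩ := Complex.exists_norm_eq_mul_self ⟪u, v⟫_ℂ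
  refine ⟨c, hc, ?_⟩
  have hexp : ‖u + c • v‖ ^ 2 = ‖u‖ ^ 2 + 2 * ‖⟪u, v⟫_ℂ‖ + ‖v‖ ^ 2 := by
    rw [norm_add_sq (𝕜 := ℂ), inner_smul_right, ← hcuv, norm_smul, hc, one_mul]
    simp
  nlinarith [norm_inner_le_norm (𝕜 := ℂ) u v, sq_nonneg (‖u‖ - ‖v‖)]

section Product

variable {H₁ H₂ : Type*} [NormedAddCommGroup H₁] [InnerProductSpace ℂ H₁]
  [NormedAddCommGroup H₂] [InnerProductSpace ℂ H₂] [CompleteSpace H₁] [CompleteSpace H₂]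

lemma adjoint_add_smul_comp_adjoint (X : H₂ →L[ℂ] H₁) (Y : H₁ →L[ℂ] H₂) {c : ℂ}
    (hc : ‖c‖ = 1) :
    (X† + c • Y) ∘L (X† + c • Y)† = X† ∘L X + Y ∘L Y† + (c • (Y ∘L X) + star (c • (Y ∘L X))) := by
  have hcc : starRingEnd ℂ c * c = 1 := by
    rw [mul_comm, Complex.mul_conj, Complex.normSq_eq_norm_sq, hc]; norm_num
  ext v
  simp only [map_add, adjoint_adjoint, map_smulₛₗ, comp_add, add_comp, smul_comp, comp_smulₛₗ,
    RingHomCompTriple.comp_apply, smul_add, smul_smul, hcc, one_smul, add_apply, comp_apply,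
    smul_apply, star_smul, RCLike.star_def, star_eq_adjoint, adjoint_comp]
  abel

lemma four_mul_norm_inner_comp_le (X : H₂ →L[ℂ] H₁) (Y : H₁ →L[ℂ] H₂) {x : H₁} (hx : ‖x‖ = 1) :
    ∃ c : ℂ, ‖c‖ = 1 ∧ 4 * ‖⟪(X ∘L Y) x, x⟫_ℂ‖
      ≤ ‖X† ∘L X + Y ∘L Y† + (c • (Y ∘L X) + star (c • (Y ∘L X)))‖ := by
  obtain ⟨c, hc, h⟩ := exists_norm_eq_one_four_mul_norm_inner_le ((X†) x) (Y x)
  refine ⟨c, hc, ?_⟩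
  set A := X† + c • Y
  have hA : ‖A ∘L A†‖ = ‖A‖ ^ 2 := by
    simpa [sq] using norm_adjoint_comp_self (A†)
  rw [← adjoint_add_smul_comp_adjoint X Y hc, hA, comp_apply, ← adjoint_inner_right,
    norm_inner_symm]
  calc _ ≤ ‖A x‖ ^ 2 := h
    _ ≤ ‖A‖ ^ 2 := by gcongr; exact A.unit_le_opNorm x hx.le

end Product

theorem numRadius_comp_le
    {H₁ H₂ : Type*} [NormedAddCommGroup H₁] [InnerProductSpace ℂ H₁]
    [NormedAddCommGroup H₂] [InnerProductSpace ℂ H₂]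
    [CompleteSpace H₁] [CompleteSpace H₂]
    (X : H₂ →L[ℂ] H₁) (Y : H₁ →L[ℂ] H₂)
    (S : H₂ →L[ℂ] H₂)
    (hS : S = (ContinuousLinearMap.adjoint X).comp X + Y.comp (ContinuousLinearMap.adjoint Y)) :
    numRadius (X.comp Y) ≤ (1 / 4 : ℝ) *
      Real.sqrt (‖S‖ ^ 2 + 4 * (numRadius (Y.comp X)) ^ 2
        + 2 * numRadius ((Y.comp X).comp S + S.comp (Y.comp X))) := by
  set W := Y ∘L X
  have hS_sa : IsSelfAdjoint S := by
    rw [hS, isSelfAdjoint_iff', map_add, adjoint_comp, adjoint_comp, adjoint_adjoint,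
      adjoint_adjoint]
  refine numRadius_le_of_unit_norm (by positivity) fun x hx => ?_
  obtain ⟨c, hc, hx4⟩ := four_mul_norm_inner_comp_le X Y hx
  rw [← hS] at hx4
  have hC : ‖c • W + star (c • W)‖ ≤ 2 * numRadius W := by
    simpa [hc] using norm_smul_add_star_le c W
  have hSC : ‖S * (c • W + star (c • W)) + (c • W + star (c • W)) * S‖
      ≤ 2 * numRadius (W ∘L S + S ∘L W) := by
    have hK : c • W * S + S * (c • W) = c • (W ∘L S + S ∘L W) := by
      rw [smul_mul_assoc, mul_smul_comm, ← smul_add]; rfl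
    rw [hS_sa.mul_add_star_add, hK]
    simpa [hc] using norm_smul_add_star_le c (W ∘L S + S ∘L W)
  have hsq := hS_sa.norm_add_sq_le (IsSelfAdjoint.add_star_self (c • W))
  have hB : ‖S + (c • W + star (c • W))‖ ≤ √(‖S‖ ^ 2 + 4 * numRadius W ^ 2
      + 2 * numRadius (W ∘L S + S ∘L W)) := by
    refine Real.le_sqrt_of_sq_le ?_
    nlinarith [norm_nonneg (c • W + star (c • W)), numRadius_nonneg W]
  linarith
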